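/- arXiv:1307.0357 — 2 statements merged into one kernel-verified Lean document; each statement's English description precedes it below -/
import Mathlib

section
/- (Gauss) For all n ≥ 0: Σ_{k=0}^{2n} (-1)^k [2n choose k]_q = (1-q)(1-q^3)···(1-q^{2n-1}), and Σ_{k=0}^{2n+1} (-1)^k [2n+1 choose k]_q = 0. -/
/-!
The alternating sum `S m = Σ_k (-1)^k [m choose k]_q` obeys `S (m+2) = (1 - q^(m+1)) S m`, with
`S 0 = 1` and `S 1 = 0`. The recursion goes through the weighted sum
`T m = Σ_k (-1)^k q^k [m choose k]_q`: the q-Pascal rule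
`[m+1 choose k+1] = q^(k+1) [m choose k+1] + [m choose k]` gives `S (m+1) = T m - S m`, and the
absorption identity `(1 - q^(k+1)) [m+1 choose k+1] = (1 - q^(m+1)) [m choose k]` gives
`T (m+1) - S (m+1) = (1 - q^(m+1)) S m`.
-/

open Finset

/-- The q-analogue `[n]_q = (1-q^n)/(1-q)`. -/
noncomputable def qNum {F : Type*} [Field F] (q : F) (n : ℕ) : F := (1 - q ^ n) / (1 - q)

/-- The q-factorial `[n]_q! = [1]_q [2]_q ⋯ [n]_q`. -/
noncomputable def qFact {F : Type*} [Field F] (q : F) (n : ℕ) : F :=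
  ∏ j ∈ Finset.Icc 1 n, qNum q j

/-- The q-binomial (Gaussian) coefficient `[n choose k]_q = [n]_q!/([k]_q! [n-k]_q!)`,
zero when `k > n`. -/
noncomputable def qBinom {F : Type*} [Field F] (q : F) (n k : ℕ) : F :=
  if k ≤ n then qFact q n / (qFact q k * qFact q (n - k)) else 0

noncomputable def qBinomAltSum {F : Type*} [Field F] (q : F) (m : ℕ) : F :=
  ∑ k ∈ range (m + 1), (-1) ^ k * qBinom q m k

noncomputable def qBinomAltSumWeighted {F : Type*} [Field F] (q : F) (m : ℕ) : F :=
  ∑ k ∈ range (m + 1), (-1) ^ k * q ^ k * qBinom q m k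

lemma sum_range_succ_shift_of_eq_zero {M : Type*} [AddCommGroup M] (f : ℕ → M) {n : ℕ}
    (h : f (n + 1) = 0) : ∑ k ∈ range (n + 1), f (k + 1) = ∑ k ∈ range (n + 1), f k - f 0 := by
  refine eq_sub_of_add_eq ((sum_range_succ' f (n + 1)).symm.trans ?_)
  rw [sum_range_succ, h, add_zero]

section

variable {F : Type*} [Field F] (q : F)

lemma qFact_zero : qFact q 0 = 1 := by
  simp [qFact]

lemma qFact_succ (m : ℕ) : qFact q (m + 1) = qFact q m * qNum q (m + 1) :=
  prod_Icc_succ_top (Nat.le_add_left 1 m) _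

lemma qBinom_of_lt {n k : ℕ} (h : n < k) : qBinom q n k = 0 :=
  if_neg h.not_ge

variable {q} (hq : ∀ j : ℕ, 1 ≤ j → q ^ j ≠ 1)
include hq

lemma one_sub_pow_ne_zero {j : ℕ} (hj : 1 ≤ j) : 1 - q ^ j ≠ 0 :=
  sub_ne_zero.mpr (hq j hj).symm

lemma one_sub_ne_zero : 1 - q ≠ 0 := by
  simpa using one_sub_pow_ne_zero hq le_rfl

lemma qFact_ne_zero (m : ℕ) : qFact q m ≠ 0 :=
  prod_ne_zero_iff.mpr fun _ hj =>
    div_ne_zero (one_sub_pow_ne_zero hq (mem_Icc.mp hj).1) (one_sub_ne_zero hq)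

lemma qBinom_zero_right (n : ℕ) : qBinom q n 0 = 1 := by
  simp [qBinom, qFact_zero, qFact_ne_zero hq]

lemma qBinom_self (n : ℕ) : qBinom q n n = 1 := by
  simp [qBinom, qFact_zero, qFact_ne_zero hq]

lemma qBinom_succ_succ (m k : ℕ) :
    qBinom q (m + 1) (k + 1) = q ^ (k + 1) * qBinom q m (k + 1) + qBinom q m k := by
  obtain hlt | rfl | hgt := lt_trichotomy k m
  · obtain ⟨b, rfl⟩ := Nat.exists_eq_add_of_lt hlt
    have := one_sub_ne_zero hq
    have := one_sub_pow_ne_zero hq (Nat.le_add_left 1 k)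
    have := one_sub_pow_ne_zero hq (Nat.le_add_left 1 b)
    have := qFact_ne_zero hq k
    have := qFact_ne_zero hq b
    have := qFact_ne_zero hq (k + b)
    simp only [qBinom, if_pos (by omega : k + 1 ≤ k + b + 1 + 1),
      if_pos (by omega : k + 1 ≤ k + b + 1), if_pos (by omega : k ≤ k + b + 1),
      show k + b + 1 + 1 - (k + 1) = b + 1 by omega, show k + b + 1 - (k + 1) = b by omega,
      show k + b + 1 - k = b + 1 by omega, qFact_succ, qNum]
    field_simp
    ring
  · rw [qBinom_self hq, qBinom_self hq, qBinom_of_lt q (Nat.lt_succ_self k)]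
    ring
  · rw [qBinom_of_lt q (by omega), qBinom_of_lt q (by omega), qBinom_of_lt q hgt]
    ring

lemma one_sub_pow_mul_qBinom_succ_succ (m k : ℕ) :
    (1 - q ^ (k + 1)) * qBinom q (m + 1) (k + 1) = (1 - q ^ (m + 1)) * qBinom q m k := by
  rcases le_or_gt k m with hle | hgt
  · have := one_sub_ne_zero hq
    have := one_sub_pow_ne_zero hq (Nat.le_add_left 1 k)
    have := qFact_ne_zero hq k
    have := qFact_ne_zero hq (m - k)
    have := qFact_ne_zero hq m
    simp only [qBinom, if_pos hle, if_pos (Nat.succ_le_succ hle), Nat.add_sub_add_right,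
      qFact_succ, qNum]
    field_simp
  · rw [qBinom_of_lt q (by omega), qBinom_of_lt q hgt, mul_zero, mul_zero]

lemma qBinomAltSum_succ (m : ℕ) :
    qBinomAltSum q (m + 1) = qBinomAltSumWeighted q m - qBinomAltSum q m := by
  have hpascal : ∑ k ∈ range (m + 1), (-1) ^ (k + 1) * qBinom q (m + 1) (k + 1) =
      ∑ k ∈ range (m + 1), (-1) ^ (k + 1) * q ^ (k + 1) * qBinom q m (k + 1) -
        qBinomAltSum q m := by
    rw [qBinomAltSum, ← sum_sub_distrib]
    refine sum_congr rfl fun k _ => ?_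
    rw [qBinom_succ_succ hq]
    ring
  rw [qBinomAltSum, sum_range_succ', hpascal, sum_range_succ_shift_of_eq_zero
    (fun k => (-1) ^ k * q ^ k * qBinom q m k) (by simp [qBinom_of_lt q (Nat.lt_succ_self m)])]
  simp only [qBinomAltSumWeighted, qBinom_zero_right hq, pow_zero, mul_one]
  ring

lemma qBinomAltSumWeighted_succ_sub (m : ℕ) :
    qBinomAltSumWeighted q (m + 1) - qBinomAltSum q (m + 1) =
      (1 - q ^ (m + 1)) * qBinomAltSum q m := by
  rw [qBinomAltSumWeighted, qBinomAltSum, qBinomAltSum, ← sum_sub_distrib, sum_range_succ',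
    mul_sum]
  simp only [pow_zero, one_mul, sub_self, add_zero]
  refine sum_congr rfl fun k _ => ?_
  linear_combination (-1) ^ k * one_sub_pow_mul_qBinom_succ_succ hq m k

lemma qBinomAltSum_add_two (m : ℕ) :
    qBinomAltSum q (m + 2) = (1 - q ^ (m + 1)) * qBinomAltSum q m := by
  rw [qBinomAltSum_succ hq, qBinomAltSumWeighted_succ_sub hq]

lemma qBinomAltSum_two_mul (n : ℕ) :
    qBinomAltSum q (2 * n) = ∏ j ∈ range n, (1 - q ^ (2 * j + 1)) := by
  induction n with
  | zero => simp [qBinomAltSum, qBinom_zero_right hq]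
  | succ n ih => rw [Nat.mul_succ, qBinomAltSum_add_two hq, ih, prod_range_succ, mul_comm]

lemma qBinomAltSum_two_mul_add_one (n : ℕ) : qBinomAltSum q (2 * n + 1) = 0 := by
  induction n with
  | zero => simp [qBinomAltSum, sum_range_succ, qBinom_zero_right hq, qBinom_self hq]
  | succ n ih => rw [Nat.mul_succ, add_right_comm, qBinomAltSum_add_two hq, ih, mul_zero]

end

/-- Gauss: `Σ_{k=0}^{2n} (-1)^k [2n choose k]_q = (1-q)(1-q^3)⋯(1-q^{2n-1})` and
`Σ_{k=0}^{2n+1} (-1)^k [2n+1 choose k]_q = 0`. -/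
theorem gauss_alternating_sum {F : Type*} [Field F] (q : F)
    (hq : ∀ j : ℕ, 1 ≤ j → q ^ j ≠ 1) (n : ℕ) :
    (∑ k ∈ Finset.range (2 * n + 1), (-1 : F) ^ k * qBinom q (2 * n) k =
      ∏ j ∈ Finset.range n, (1 - q ^ (2 * j + 1))) ∧
    (∑ k ∈ Finset.range (2 * n + 2), (-1 : F) ^ k * qBinom q (2 * n + 1) k = 0) :=
  ⟨qBinomAltSum_two_mul hq n, qBinomAltSum_two_mul_add_one hq n⟩
end

section
/- The moments of Fibonacci polynomials are Catalan numbers: if Λ_F is the linear functional on polynomials determined by Λ_F(F_{n+1}(x,-1)) = [n=0], then Λ_F(x^{2n}) = C_n = (1/(n+1)) C(2n,n) and Λ_F(x^{2n+1}) = 0. -/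
/-!
The Fibonacci polynomials `F_{n+1}(x,-1)` are the Vieta–Fibonacci polynomials `S_n`, which
extend to all `n : ℤ` with `S_{-n-2} = -S_n` and `X S_n = S_{n+1} + S_{n-1}`. Iterating,
`X^n = ∑ᵢ C(n,i) S_{n-2i}`, so `Λ(X^n)` counts the terms with `n - 2i = 0` minus those with
`n - 2i = -2` (reflection principle): `Λ(X^{2m}) = C(2m,m) - C(2m,m+1) = C_m`, and odd moments vanish.
-/

open Finset Polynomial

/-- The Fibonacci polynomials `F_n(x,-1)`:
`F_0 = 0`, `F_1 = 1`, `F_{n+2} = x F_{n+1} - F_{n}`. -/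
noncomputable def fibPoly : ℕ → Polynomial ℝ
  | 0 => 0
  | 1 => 1
  | (n + 2) => Polynomial.X * fibPoly (n + 1) - fibPoly n

open Polynomial.Chebyshev

theorem Nat.catalan_add_choose_succ (m : ℕ) :
    catalan m + (2 * m).choose (m + 1) = (2 * m).choose m := by
  have hsucc : (2 * m).choose (m + 1) * (m + 1) = (2 * m).choose m * m := by
    rw [Nat.choose_succ_right_eq, show 2 * m - m = m by omega]
  apply Nat.eq_of_mul_eq_mul_left (show 0 < m + 1 by omega)
  rw [mul_add, mul_comm (m + 1) ((2 * m).choose (m + 1)), hsucc, succ_mul_catalan_eq_centralBinom,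
    Nat.centralBinom_eq_two_mul_choose]
  ring

theorem Nat.cast_catalan_eq_choose_div {K : Type*} [DivisionRing K] [CharZero K] (n : ℕ) :
    (catalan n : K) = (2 * n).choose n / (n + 1) := by
  rw [eq_div_iff (by exact_mod_cast n.succ_ne_zero), ← Nat.centralBinom_eq_two_mul_choose,
    ← succ_mul_catalan_eq_centralBinom]
  push_cast
  exact Nat.cast_comm _ _

namespace Polynomial.Chebyshev

variable {R : Type*} [CommRing R]

theorem X_mul_S (n : ℤ) : X * S R n = S R (n + 1) + S R (n - 1) := by
  rw [S_add_one]
  ring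

theorem X_pow_eq_sum_choose_mul_S (n : ℕ) :
    (X : R[X]) ^ n = ∑ i ∈ range (n + 1), (n.choose i : R[X]) * S R (n - 2 * i) := by
  induction n with
  | zero => simp
  | succ n ih =>
    rw [sum_choose_succ_mul (fun i _ => S R ((n + 1 : ℕ) - 2 * i)), pow_succ', ih, mul_sum,
      ← sum_add_distrib]
    refine sum_congr rfl fun i _ => ?_
    rw [mul_left_comm, X_mul_S]
    push_cast
    ring_nf

def IsMomentFunctionalOfS (Λ : R[X] →ₗ[R] R) : Prop :=
  ∀ k : ℕ, Λ (S R k) = if k = 0 then 1 else 0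

namespace IsMomentFunctionalOfS

variable {Λ : R[X] →ₗ[R] R}

theorem apply_S (hΛ : IsMomentFunctionalOfS Λ) (m : ℤ) :
    Λ (S R m) = (if m = 0 then 1 else 0) - if m = -2 then 1 else 0 := by
  obtain ⟨k, rfl | rfl⟩ := Int.eq_nat_or_neg m
  · rw [hΛ k, if_neg (show (k : ℤ) ≠ -2 by omega)]
    simp
  · rcases k with _ | _ | k
    · simpa using hΛ 0
    · simp [S_neg_one]
    · rw [show -((k + 2 : ℕ) : ℤ) = -k - 2 by push_cast; ring, S_neg_sub_two, map_neg, hΛ k]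
      simp [show -(k : ℤ) - 2 ≠ 0 by omega]

theorem apply_X_pow (hΛ : IsMomentFunctionalOfS Λ) (n : ℕ) :
    Λ (X ^ n) = ∑ i ∈ range (n + 1),
      (n.choose i : R) * ((if (n : ℤ) - 2 * i = 0 then 1 else 0) -
        if (n : ℤ) - 2 * i = -2 then 1 else 0) := by
  simp only [X_pow_eq_sum_choose_mul_S, map_sum, ← hΛ.apply_S]
  refine sum_congr rfl fun i _ => ?_
  rw [← Polynomial.C_eq_natCast, ← smul_eq_C_mul, map_smul, smul_eq_mul]

theorem apply_X_pow_two_mul (hΛ : IsMomentFunctionalOfS Λ) (m : ℕ) :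
    Λ (X ^ (2 * m)) = (2 * m).choose m - (2 * m).choose (m + 1) := by
  have hmid : ∀ i : ℕ, ((2 * m : ℕ) : ℤ) - 2 * i = 0 ↔ i = m := by omega
  have hnext : ∀ i : ℕ, ((2 * m : ℕ) : ℤ) - 2 * i = -2 ↔ i = m + 1 := by omega
  simp only [hΛ.apply_X_pow, hmid, hnext, mul_sub, mul_ite, mul_one, mul_zero, sum_sub_distrib,
    sum_ite_eq', mem_range, if_pos (show m < 2 * m + 1 by omega)]
  split_ifs
  · rfl
  · rw [Nat.choose_eq_zero_of_lt (show 2 * m < m + 1 by omega), Nat.cast_zero]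

theorem apply_X_pow_two_mul_add_one (hΛ : IsMomentFunctionalOfS Λ) (m : ℕ) :
    Λ (X ^ (2 * m + 1)) = 0 := by
  rw [hΛ.apply_X_pow]
  refine sum_eq_zero fun i _ => ?_
  have hodd : ((2 * m + 1 : ℕ) : ℤ) - 2 * i ≠ 0 ∧ ((2 * m + 1 : ℕ) : ℤ) - 2 * i ≠ -2 := by omega
  simp only [hodd, if_false, sub_zero, mul_zero]

end IsMomentFunctionalOfS

end Polynomial.Chebyshev

theorem fibPoly_succ_eq_S : ∀ n : ℕ, fibPoly (n + 1) = S ℝ n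
  | 0 => by simp [fibPoly]
  | 1 => by simp [fibPoly]
  | n + 2 => by
    rw [fibPoly, fibPoly_succ_eq_S (n + 1), fibPoly_succ_eq_S n]
    push_cast
    exact (S_add_two ℝ n).symm

/-- The moments of the Fibonacci polynomials are the Catalan numbers:
if `Λ(F_{n+1}(x,-1)) = [n=0]` then `Λ(x^{2n}) = C_n = C(2n,n)/(n+1)` and
`Λ(x^{2n+1}) = 0`. -/
theorem fibonacci_moments (Λ : Polynomial ℝ →ₗ[ℝ] ℝ)
    (h : ∀ n : ℕ, Λ (fibPoly (n + 1)) = if n = 0 then 1 else 0) (n : ℕ) :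
    Λ (Polynomial.X ^ (2 * n)) = catalan n ∧
    Λ (Polynomial.X ^ (2 * n)) = ((2 * n).choose n : ℝ) / (n + 1) ∧
    Λ (Polynomial.X ^ (2 * n + 1)) = 0 := by
  have hΛ : IsMomentFunctionalOfS Λ := fun k => by rw [← fibPoly_succ_eq_S, h]
  have heven : Λ (X ^ (2 * n)) = catalan n := by
    rw [hΛ.apply_X_pow_two_mul, ← Nat.catalan_add_choose_succ]
    push_cast
    ring
  exact ⟨heven, heven.trans (Nat.cast_catalan_eq_choose_div n), hΛ.apply_X_pow_two_mul_add_one n⟩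
end
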